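/- (Equivalence Dirichlet → Neumann.) Assume α₂ > α₃ and A > B. Let μ₁ > z₀ be the unique solution of the reduced Dirichlet system with data A, and let μ₂ ≥ 0 satisfy erf(μ₂·√(α₁/α₂)) = H(μ₁). Assume moreover k₃·(A−B)/(√α₃·erf(μ₂·√(α₁/α₃))) > k₂·(B−C)/(√α₂·erf(z₀·√(α₁/α₂))), and define q₀ := (k₃/√(π·α₃))·(A−B)/erf(μ₂·√(α₁/α₃)). Then q₀ > q₂ and Q(μ₁) = P(μ₂), where P is the Neumann function built from this q₀; consequently μ₁ coincides with the unique solution λ₁ > z₀ of the reduced Neumann system with data q₀, and μ₂ = λ₂. -/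

import Mathlib

noncomputable section

/-- The error function `erf x = (2/√π) ∫₀ˣ exp(−s²) ds`. -/
def erf (x : ℝ) : ℝ := (2 / Real.sqrt Real.pi) * ∫ s in (0:ℝ)..x, Real.exp (-(s^2))

/-- The complementary error function. -/
def erfc (x : ℝ) : ℝ := 1 - erf x

/-- Physical data of the three-phase Stefan problem: positive thermal conductivities,
specific heats, mass density, latent heats, and temperatures `B > C > D`. -/
structure Params where
  k₁ : ℝ
  k₂ : ℝ
  k₃ : ℝ
  c₁ : ℝ
  c₂ : ℝ
  c₃ : ℝ
  ρ : ℝ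
  ℓ₁ : ℝ
  ℓ₂ : ℝ
  B : ℝ
  C : ℝ
  D : ℝ
  hk₁ : 0 < k₁
  hk₂ : 0 < k₂
  hk₃ : 0 < k₃
  hc₁ : 0 < c₁
  hc₂ : 0 < c₂
  hc₃ : 0 < c₃
  hρ : 0 < ρ
  hℓ₁ : 0 < ℓ₁
  hℓ₂ : 0 < ℓ₂
  hBC : C < B
  hCD : D < C

namespace Params

/-- Thermal diffusivity of phase 1. -/
def α₁ (p : Params) : ℝ := p.k₁ / (p.ρ * p.c₁)

/-- Thermal diffusivity of phase 2. -/
def α₂ (p : Params) : ℝ := p.k₂ / (p.ρ * p.c₂)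

/-- Thermal diffusivity of phase 3. -/
def α₃ (p : Params) : ℝ := p.k₃ / (p.ρ * p.c₃)

/-- Stefan number `Ste₁ = c₁(C−D)/ℓ₁`. -/
def Ste₁ (p : Params) : ℝ := p.c₁ * (p.C - p.D) / p.ℓ₁

/-- Stefan number `Ste₂ = c₂(B−C)/ℓ₂`. -/
def Ste₂ (p : Params) : ℝ := p.c₂ * (p.B - p.C) / p.ℓ₂

/-- `φ(z) = z + (Ste₁/√π) exp(−z²)/erfc(z)`. -/
def φ (p : Params) (z : ℝ) : ℝ :=
  z + (p.Ste₁ / Real.sqrt Real.pi) * Real.exp (-(z^2)) / erfc z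

/-- `H(z) = erf(z√(α₁/α₂)) − (Ste₂/√π)(ℓ₂/ℓ₁)√(k₂c₁/(k₁c₂)) exp(−z²α₁/α₂)/φ(z)`. -/
def H (p : Params) (z : ℝ) : ℝ :=
  erf (z * Real.sqrt (p.α₁ / p.α₂)) -
    (p.Ste₂ / Real.sqrt Real.pi) * (p.ℓ₂ / p.ℓ₁) *
      Real.sqrt (p.k₂ * p.c₁ / (p.k₁ * p.c₂)) *
      (Real.exp (-(z^2) * (p.α₁ / p.α₂)) / p.φ z)

/-- `Q(z) = (ℓ₁/ℓ₂) φ(z) exp(z² α₁/α₂)`. -/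
def Q (p : Params) (z : ℝ) : ℝ :=
  (p.ℓ₁ / p.ℓ₂) * p.φ z * Real.exp (z^2 * (p.α₁ / p.α₂))

/-- The function `T` arising from the Robin (convective) boundary condition with
heat-transfer coefficient `h₀` and bulk temperature `Ainf`. -/
def T (p : Params) (h₀ Ainf : ℝ) (z : ℝ) : ℝ :=
  (p.Ste₂ / (Real.sqrt Real.pi * p.c₂)) * ((Ainf - p.B) / (p.B - p.C)) *
    Real.sqrt (p.k₃ * p.c₁ * p.c₃ / p.k₁) *
    (Real.exp (-(z^2) * p.α₁ * (1 / p.α₃ - 1 / p.α₂)) /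
      (p.k₃ / (h₀ * Real.sqrt (Real.pi * p.α₃)) + erf (z * Real.sqrt (p.α₁ / p.α₃)))) -
  z * Real.exp (z^2 * (p.α₁ / p.α₂))

/-- The function `V` arising from the Dirichlet boundary condition with temperature `A`. -/
def V (p : Params) (A : ℝ) (z : ℝ) : ℝ :=
  ((A - p.B) / p.ℓ₂) * Real.sqrt (p.c₁ * p.c₃ * p.k₃ / (Real.pi * p.k₁)) *
    (Real.exp (-(z^2) * (p.α₁ / p.α₃ - p.α₁ / p.α₂)) / erf (z * Real.sqrt (p.α₁ / p.α₃))) -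
  z * Real.exp (z^2 * (p.α₁ / p.α₂))

/-- The function `P` arising from the Neumann boundary condition with flux coefficient `q₀`. -/
def P (p : Params) (q₀ : ℝ) (z : ℝ) : ℝ :=
  Real.exp (z^2 * (p.α₁ / p.α₂)) *
    (-z + (q₀ / p.ℓ₂) * Real.sqrt (p.c₁ / (p.ρ * p.k₁)) * Real.exp (-(z^2) * (p.α₁ / p.α₃)))

/-- Critical heat-transfer coefficient `h₂`. -/
def h2 (p : Params) (Ainf z₀ : ℝ) : ℝ :=
  ((p.B - p.C) / (Ainf - p.B)) *
    Real.sqrt (p.k₂ * p.k₃ * p.c₂ / (Real.pi * p.c₃ * p.α₃)) *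
    (1 / erf (z₀ * Real.sqrt (p.α₁ / p.α₂)))

/-- Critical heat-flux coefficient `q₂`. -/
def q2 (p : Params) (z₀ : ℝ) : ℝ :=
  p.k₂ * (p.B - p.C) / (Real.sqrt (p.α₂ * Real.pi) * erf (z₀ * Real.sqrt (p.α₁ / p.α₂)))

end Params

/-! With `q₀` as given, the coefficient of `exp (-z² (α₁/α₃ - α₁/α₂))` in the Neumann function
`P q₀` is exactly the one in the Dirichlet function `V A`, so `V A = P q₀` at `μ₂` and the Dirichlet
solution solves the Neumann system; `q₂ < q₀` is the flux hypothesis divided by `√π`.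
Uniqueness is a monotonicity argument: the Mills ratio `exp (-x²) / erfc x` is increasing, hence so
are `φ`, `Q` and `H` on `[0, ∞)`, while `P q₀` is decreasing there when `q₀ > 0` and `α₃ < α₂`.
If `λ₁ < μ₁`, the first equation forces `λ₂ < μ₂` and the second `λ₂ > μ₂`. -/

open MeasureTheory Set Real

lemma setIntegral_Ioi_pos {f : ℝ → ℝ} {a : ℝ} (hf : IntegrableOn f (Ioi a))
    (hpos : ∀ x ∈ Ioi a, 0 < f x) : 0 < ∫ x in Ioi a, f x := by
  rw [setIntegral_pos_iff_support_of_nonneg_ae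
    ((ae_restrict_iff' measurableSet_Ioi).2 (.of_forall fun x hx => (hpos x hx).le)) hf]
  have hsupp : Function.support f ∩ Ioi a = Ioi a :=
    inter_eq_right.2 fun x hx => (hpos x hx).ne'
  simp [hsupp]

lemma setIntegral_Ioi_lt_setIntegral_Ioi {f g : ℝ → ℝ} {a : ℝ} (hf : IntegrableOn f (Ioi a))
    (hg : IntegrableOn g (Ioi a)) (hfg : ∀ x ∈ Ioi a, f x < g x) :
    ∫ x in Ioi a, f x < ∫ x in Ioi a, g x := by
  have h := setIntegral_Ioi_pos (f := fun x => g x - f x) (hg.sub hf)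
    fun x hx => sub_pos.2 (hfg x hx)
  rw [integral_sub hg hf] at h
  linarith

lemma setIntegral_Ioi_eq_setIntegral_Ioi_zero_comp_add (f : ℝ → ℝ) (z : ℝ) :
    ∫ s in Ioi z, f s = ∫ t in Ioi 0, f (t + z) := by
  have h := (measurePreserving_add_right (volume : Measure ℝ) z).setIntegral_preimage_emb
    (measurableEmbedding_addRight z) f (Ioi z)
  have hpre : (· + z) ⁻¹' Ioi z = Ioi 0 := by
    ext t
    simp
  rw [hpre] at h
  exact h.symm

lemma integrable_exp_neg_sq : Integrable fun s : ℝ => exp (-(s ^ 2)) := by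
  simpa using integrable_exp_neg_mul_sq one_pos

lemma erf_strictMono : StrictMono erf := by
  intro x y hxy
  have hsplit := intervalIntegral.integral_add_adjacent_intervals
    (integrable_exp_neg_sq.intervalIntegrable (a := 0) (b := x))
    (integrable_exp_neg_sq.intervalIntegrable (b := y))
  have hpos : 0 < ∫ s in x..y, exp (-(s ^ 2)) :=
    intervalIntegral.intervalIntegral_pos_of_pos
      integrable_exp_neg_sq.intervalIntegrable (fun s => exp_pos _) hxy
  unfold erf
  rw [← hsplit]
  gcongr
  linarith

lemma erf_pos {z : ℝ} (hz : 0 < z) : 0 < erf z := by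
  simpa [erf] using erf_strictMono hz

lemma erfc_eq_two_div_sqrt_pi_mul_setIntegral_Ioi (z : ℝ) :
    erfc z = 2 / √π * ∫ s in Ioi z, exp (-(s ^ 2)) := by
  have htail : ∫ s in Ioi (0 : ℝ), exp (-(s ^ 2)) = √π / 2 := by
    simpa using integral_gaussian_Ioi 1
  have hsplit := intervalIntegral.integral_Ioi_sub_Ioi' (a := 0) (b := z)
    integrable_exp_neg_sq.integrableOn integrable_exp_neg_sq.integrableOn
  have hpi : √π ≠ 0 := (sqrt_pos.2 pi_pos).ne'
  rw [erfc, erf, ← hsplit, htail]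
  field_simp
  ring

lemma erfc_pos (z : ℝ) : 0 < erfc z := by
  rw [erfc_eq_two_div_sqrt_pi_mul_setIntegral_Ioi]
  have := setIntegral_Ioi_pos (a := z) integrable_exp_neg_sq.integrableOn fun s _ => exp_pos _
  have := sqrt_pos.2 pi_pos
  positivity

lemma strictMono_exp_neg_sq_div_erfc : StrictMono fun x => exp (-(x ^ 2)) / erfc x := by
  intro x y hxy
  dsimp only
  rw [div_lt_div_iff₀ (erfc_pos x) (erfc_pos y), erfc_eq_two_div_sqrt_pi_mul_setIntegral_Ioi,
    erfc_eq_two_div_sqrt_pi_mul_setIntegral_Ioi, mul_left_comm, mul_left_comm (exp _)]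
  refine mul_lt_mul_of_pos_left ?_ (div_pos two_pos (sqrt_pos.2 pi_pos))
  rw [setIntegral_Ioi_eq_setIntegral_Ioi_zero_comp_add _ x,
    setIntegral_Ioi_eq_setIntegral_Ioi_zero_comp_add _ y,
    ← integral_const_mul, ← integral_const_mul]
  refine setIntegral_Ioi_lt_setIntegral_Ioi
    ((integrable_exp_neg_sq.comp_add_right y).const_mul _).integrableOn
    ((integrable_exp_neg_sq.comp_add_right x).const_mul _).integrableOn fun t ht => ?_
  -- after shifting both tails to `(0, ∞)`, `x² + (t + y)² > y² + (t + x)²` for `t > 0`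
  rw [← exp_add, ← exp_add, exp_lt_exp]
  nlinarith [mem_Ioi.1 ht]

lemma exp_sq_mul_strictMonoOn {r : ℝ} (hr : 0 < r) :
    StrictMonoOn (fun z : ℝ => exp (z ^ 2 * r)) (Ici 0) := fun x hx y _ hxy => by
  simp only [exp_lt_exp]
  gcongr

lemma eq_and_eq_of_strictMonoOn_of_strictAntiOn {α β γ δ : Type*} [LinearOrder α]
    [LinearOrder β] [Preorder γ] [Preorder δ] {s : Set α} {t : Set β} {f : α → γ} {g : β → γ}
    {F : α → δ} {G : β → δ} (hf : StrictMonoOn f s) (hg : StrictMonoOn g t)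
    (hF : StrictMonoOn F s) (hG : StrictAntiOn G t) {a b : α} {a' b' : β}
    (ha : a ∈ s) (hb : b ∈ s) (ha' : a' ∈ t) (hb' : b' ∈ t)
    (hfa : f a = g a') (hfb : f b = g b') (hFa : F a = G a') (hFb : F b = G b') :
    a = b ∧ a' = b' := by
  have hnot : ∀ {a b : α} {a' b' : β}, a ∈ s → b ∈ s → a' ∈ t → b' ∈ t →
      f a = g a' → f b = g b' → F a = G a' → F b = G b' → ¬ a < b := by
    intro a b a' b' ha hb ha' hb' hfa hfb hFa hFb hab
    have hab' : a' < b' := (hg.lt_iff_lt ha' hb').1 (hfa ▸ hfb ▸ hf ha hb hab)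
    exact lt_asymm (hF ha hb hab) (hFa ▸ hFb ▸ hG ha' hb' hab')
  obtain rfl : a = b := le_antisymm (not_lt.1 (hnot hb ha hb' ha' hfb hfa hFb hFa))
    (not_lt.1 (hnot ha hb ha' hb' hfa hfb hFa hFb))
  exact ⟨rfl, hg.injOn ha' hb' (hfa.symm.trans hfb)⟩

namespace Params

variable (p : Params)

lemma α₁_pos : 0 < p.α₁ := div_pos p.hk₁ (mul_pos p.hρ p.hc₁)

lemma α₂_pos : 0 < p.α₂ := div_pos p.hk₂ (mul_pos p.hρ p.hc₂)

lemma α₃_pos : 0 < p.α₃ := div_pos p.hk₃ (mul_pos p.hρ p.hc₃)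

lemma Ste₁_pos : 0 < p.Ste₁ := div_pos (mul_pos p.hc₁ (sub_pos.2 p.hCD)) p.hℓ₁

lemma Ste₂_pos : 0 < p.Ste₂ := div_pos (mul_pos p.hc₂ (sub_pos.2 p.hBC)) p.hℓ₂

lemma φ_strictMono : StrictMono p.φ := by
  intro _ _ hxy
  have hmills := strictMono_exp_neg_sq_div_erfc hxy
  have hc : 0 < p.Ste₁ / √π := div_pos p.Ste₁_pos (sqrt_pos.2 pi_pos)
  simp only [φ, mul_div_assoc]
  gcongr

lemma φ_pos {z : ℝ} (hz : 0 ≤ z) : 0 < p.φ z := by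
  have := p.Ste₁_pos
  have := erfc_pos z
  unfold φ
  positivity

lemma φ_mul_exp_strictMonoOn :
    StrictMonoOn (fun z => p.φ z * exp (z ^ 2 * (p.α₁ / p.α₂))) (Ici 0) :=
  fun _ hx _ hy hxy => mul_lt_mul'' (p.φ_strictMono hxy)
    (exp_sq_mul_strictMonoOn (div_pos p.α₁_pos p.α₂_pos) hx hy hxy) (p.φ_pos hx).le (exp_pos _).le

lemma Q_strictMonoOn : StrictMonoOn p.Q (Ici 0) := fun x hx y hy hxy => by
  simp only [Q, mul_assoc]
  exact mul_lt_mul_of_pos_left (p.φ_mul_exp_strictMonoOn hx hy hxy) (div_pos p.hℓ₁ p.hℓ₂)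

lemma H_strictMonoOn : StrictMonoOn p.H (Ici 0) := fun x hx y hy hxy => by
  have hs : 0 < √(p.α₁ / p.α₂) := sqrt_pos.2 (div_pos p.α₁_pos p.α₂_pos)
  have hK : 0 < p.Ste₂ / √π * (p.ℓ₂ / p.ℓ₁) * √(p.k₂ * p.c₁ / (p.k₁ * p.c₂)) := by
    have := p.Ste₂_pos
    have := p.hℓ₁
    have := p.hℓ₂
    have := sqrt_pos.2 pi_pos
    have := sqrt_pos.2 (div_pos (mul_pos p.hk₂ p.hc₁) (mul_pos p.hk₁ p.hc₂))
    positivity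
  have hrecip : ∀ z, exp (-(z ^ 2) * (p.α₁ / p.α₂)) / p.φ z
      = (p.φ z * exp (z ^ 2 * (p.α₁ / p.α₂)))⁻¹ := fun z => by
    rw [neg_mul, exp_neg, mul_inv, div_eq_mul_inv, mul_comm]
  have hprod := p.φ_mul_exp_strictMonoOn hx hy hxy
  have hprod_pos : 0 < p.φ x * exp (x ^ 2 * (p.α₁ / p.α₂)) := mul_pos (p.φ_pos hx) (exp_pos _)
  unfold H
  rw [hrecip, hrecip]
  have := erf_strictMono (mul_lt_mul_of_pos_right hxy hs)
  gcongr

lemma P_strictAntiOn {q₀ : ℝ} (hq₀ : 0 < q₀) (hα : p.α₃ < p.α₂) :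
    StrictAntiOn (p.P q₀) (Ici 0) := fun x hx y hy hxy => by
  have hr : 0 < p.α₁ / p.α₃ - p.α₁ / p.α₂ :=
    sub_pos.2 (div_lt_div_of_pos_left p.α₁_pos p.α₃_pos hα)
  have hc : 0 < q₀ / p.ℓ₂ * √(p.c₁ / (p.ρ * p.k₁)) :=
    mul_pos (div_pos hq₀ p.hℓ₂) (sqrt_pos.2 (div_pos p.hc₁ (mul_pos p.hρ p.hk₁)))
  have hP : ∀ z, p.P q₀ z = -(z * exp (z ^ 2 * (p.α₁ / p.α₂)))
      + q₀ / p.ℓ₂ * √(p.c₁ / (p.ρ * p.k₁)) * exp (-(z ^ 2 * (p.α₁ / p.α₃ - p.α₁ / p.α₂))) := by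
    intro z
    have hsplit : exp (-(z ^ 2 * (p.α₁ / p.α₃ - p.α₁ / p.α₂)))
        = exp (z ^ 2 * (p.α₁ / p.α₂)) * exp (-(z ^ 2) * (p.α₁ / p.α₃)) := by
      rw [← exp_add]
      ring_nf
    rw [P, hsplit]
    ring
  have hexp := exp_sq_mul_strictMonoOn hr hx hy hxy
  have hlin := mul_lt_mul'' hxy
    (exp_sq_mul_strictMonoOn (div_pos p.α₁_pos p.α₂_pos) hx hy hxy) hx (exp_pos _).le
  dsimp only at hexp hlin
  rw [hP, hP, exp_neg, exp_neg]
  gcongr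

lemma q2_mul_sqrt_pi (z : ℝ) : p.q2 z * √π
    = p.k₂ * (p.B - p.C) / (√p.α₂ * erf (z * √(p.α₁ / p.α₂))) := by
  have := (sqrt_pos.2 pi_pos).ne'
  rw [q2, sqrt_mul p.α₂_pos.le]
  field_simp

lemma q2_pos {z : ℝ} (hz : 0 < z) : 0 < p.q2 z := by
  have := erf_pos (mul_pos hz (sqrt_pos.2 (div_pos p.α₁_pos p.α₂_pos)))
  have := sqrt_pos.2 (mul_pos p.α₂_pos pi_pos)
  have := sub_pos.2 p.hBC
  have := p.hk₂
  unfold q2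
  positivity

lemma k₃_div_sqrt_pi_α₃_mul_sqrt_eq :
    p.k₃ / √(π * p.α₃) * √(p.c₁ / (p.ρ * p.k₁)) = √(p.c₁ * p.c₃ * p.k₃ / (π * p.k₁)) := by
  rw [← sqrt_sq p.hk₃.le, ← sqrt_div' _ (mul_pos pi_pos p.α₃_pos).le,
    ← sqrt_mul (div_nonneg (sq_nonneg _) (mul_pos pi_pos p.α₃_pos).le), sqrt_sq p.hk₃.le]
  congr 1
  have := p.hk₃.ne'
  have := p.hk₁.ne'
  have := p.hρ.ne'
  have := p.hc₃.ne'
  unfold α₃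
  field_simp

lemma V_eq_P (A z : ℝ) :
    p.V A z = p.P (p.k₃ / √(π * p.α₃) * ((A - p.B) / erf (z * √(p.α₁ / p.α₃)))) z := by
  have hexp : exp (-(z ^ 2) * (p.α₁ / p.α₃ - p.α₁ / p.α₂))
      = exp (z ^ 2 * (p.α₁ / p.α₂)) * exp (-(z ^ 2) * (p.α₁ / p.α₃)) := by
    rw [← exp_add]
    ring_nf
  rw [V, P, ← k₃_div_sqrt_pi_α₃_mul_sqrt_eq, hexp]
  ring

end Params

theorem dirichlet_to_neumann_general (p : Params) (A z₀ μ₁ μ₂ q₀ : ℝ)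
    (hα : p.α₃ < p.α₂)
    (hz₀ : 0 < z₀ ∧ p.H z₀ = 0)
    (hμ₁ : z₀ < μ₁) (hμ₂ : 0 ≤ μ₂)
    (herf : erf (μ₂ * Real.sqrt (p.α₁ / p.α₂)) = p.H μ₁)
    (hsys : p.Q μ₁ = p.V A μ₂)
    (hcond : p.k₃ * (A - p.B) /
        (Real.sqrt p.α₃ * erf (μ₂ * Real.sqrt (p.α₁ / p.α₃))) >
      p.k₂ * (p.B - p.C) /
        (Real.sqrt p.α₂ * erf (z₀ * Real.sqrt (p.α₁ / p.α₂))))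
    (hq₀ : q₀ = (p.k₃ / Real.sqrt (Real.pi * p.α₃)) *
      ((A - p.B) / erf (μ₂ * Real.sqrt (p.α₁ / p.α₃)))) :
    p.q2 z₀ < q₀ ∧ p.Q μ₁ = p.P q₀ μ₂ ∧
    ∀ lam₁ lam₂ : ℝ, z₀ < lam₁ → 0 ≤ lam₂ →
      erf (lam₂ * Real.sqrt (p.α₁ / p.α₂)) = p.H lam₁ →
      p.Q lam₁ = p.P q₀ lam₂ → lam₁ = μ₁ ∧ lam₂ = μ₂ := by
  obtain ⟨hz₀, -⟩ := hz₀
  have hq₀_mul : q₀ * √π = p.k₃ * (A - p.B) / (√p.α₃ * erf (μ₂ * √(p.α₁ / p.α₃))) := by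
    have := (sqrt_pos.2 pi_pos).ne'
    rw [hq₀, sqrt_mul pi_pos.le]
    field_simp
  have hq₂q₀ : p.q2 z₀ < q₀ := by
    rw [← mul_lt_mul_iff_of_pos_right (sqrt_pos.2 pi_pos), p.q2_mul_sqrt_pi, hq₀_mul]
    exact hcond
  have hQP : p.Q μ₁ = p.P q₀ μ₂ := hsys.trans (hq₀ ▸ p.V_eq_P A μ₂)
  refine ⟨hq₂q₀, hQP, fun lam₁ lam₂ hlam₁ hlam₂ herf' hQP' => ?_⟩
  have herf_strictMono : StrictMono fun z => erf (z * √(p.α₁ / p.α₂)) :=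
    erf_strictMono.comp (strictMono_mul_right_of_pos (sqrt_pos.2 (div_pos p.α₁_pos p.α₂_pos)))
  exact eq_and_eq_of_strictMonoOn_of_strictAntiOn p.H_strictMonoOn (herf_strictMono.strictMonoOn _)
    p.Q_strictMonoOn (p.P_strictAntiOn ((p.q2_pos hz₀).trans hq₂q₀) hα)
    (hz₀.trans hlam₁).le (hz₀.trans hμ₁).le hlam₂ hμ₂ herf'.symm herf.symm hQP' hQP

/-- Equivalence Dirichlet → Neumann. -/
theorem dirichlet_to_neumann (p : Params) (A z₀ μ₁ μ₂ q₀ : ℝ)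
    (hα : p.α₃ < p.α₂) (hA : p.B < A)
    (hz₀ : 0 < z₀ ∧ p.H z₀ = 0)
    (hμ₁ : z₀ < μ₁) (hμ₂ : 0 ≤ μ₂)
    (herf : erf (μ₂ * Real.sqrt (p.α₁ / p.α₂)) = p.H μ₁)
    (hsys : p.Q μ₁ = p.V A μ₂)
    (hcond : p.k₃ * (A - p.B) /
        (Real.sqrt p.α₃ * erf (μ₂ * Real.sqrt (p.α₁ / p.α₃))) >
      p.k₂ * (p.B - p.C) /
        (Real.sqrt p.α₂ * erf (z₀ * Real.sqrt (p.α₁ / p.α₂))))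
    (hq₀ : q₀ = (p.k₃ / Real.sqrt (Real.pi * p.α₃)) *
      ((A - p.B) / erf (μ₂ * Real.sqrt (p.α₁ / p.α₃)))) :
    p.q2 z₀ < q₀ ∧ p.Q μ₁ = p.P q₀ μ₂ ∧
    ∀ lam₁ lam₂ : ℝ, z₀ < lam₁ → 0 ≤ lam₂ →
      erf (lam₂ * Real.sqrt (p.α₁ / p.α₂)) = p.H lam₁ →
      p.Q lam₁ = p.P q₀ lam₂ → lam₁ = μ₁ ∧ lam₂ = μ₂ :=
  dirichlet_to_neumann_general p A z₀ μ₁ μ₂ q₀ hα hz₀ hμ₁ hμ₂ herf hsys hcond hq₀
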